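/- Let p be a prime and n ≥ 2. Every finite index subgroup H of the principal congruence subgroup Γ_n(p) ≤ SL_n(Z) admits a surjective group homomorphism onto the cyclic group Z/pZ. -/

import Mathlib

/-!
`Γ_n(p)` is infinite, so a finite index subgroup `H` contains some `h ≠ 1`, and `h` survives
reduction modulo `p ^ (k + 1)` for `k` large. Since `g ≡ 1 mod p` implies
`g ^ p ^ k ≡ 1 mod p ^ (k + 1)`, the image of `H` in `SL_n(ℤ/p^(k+1))` is a nontrivial finite
`p`-group, and every such group has a normal subgroup of index `p`.
-/

/-- The principal congruence subgroup `Γ_n(m)` of `SL_n(ℤ)`. -/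
def Gamma (n m : ℕ) : Subgroup (Matrix.SpecialLinearGroup (Fin n) ℤ) :=
  (Matrix.SpecialLinearGroup.map (n := Fin n) (Int.castRingHom (ZMod m))).ker

open Matrix
open scoped Polynomial

/-- As `R` need not be commutative, the congruence is proved for `1 + pX` in `ℤ[X]` and evaluated
at `X = (a - 1) / p`. -/
theorem natCast_pow_succ_dvd_pow_pow_sub_one {R : Type*} [Ring R] {p : ℕ} {a : R}
    (h : (p : R) ∣ a - 1) (k : ℕ) : (p : R) ^ (k + 1) ∣ a ^ p ^ k - 1 := by
  obtain ⟨b, hb⟩ := h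
  have key := dvd_sub_pow_of_dvd_sub (R := ℤ[X]) (p := p) (a := 1 + (p : ℤ[X]) * Polynomial.X)
    (b := 1) ⟨Polynomial.X, by ring⟩ k
  rw [eq_add_of_sub_eq' hb]
  simpa using map_dvd (Polynomial.aeval b) key

theorem Matrix.natCast_dvd_iff {ι α : Type*} [Fintype ι] [DecidableEq ι] [Semiring α] {m : ℕ}
    {M : Matrix ι ι α} : (m : Matrix ι ι α) ∣ M ↔ ∀ i j, (m : α) ∣ M i j := by
  constructor
  · rintro ⟨B, rfl⟩ i j
    exact ⟨B i j, by rw [← nsmul_eq_mul, smul_apply, nsmul_eq_mul]⟩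
  · intro h
    choose B hB using h
    refine ⟨Matrix.of B, ?_⟩
    ext i j
    rw [← nsmul_eq_mul, smul_apply, of_apply, nsmul_eq_mul, hB]

theorem mem_Gamma_iff {n m : ℕ} {g : SpecialLinearGroup (Fin n) ℤ} :
    g ∈ Gamma n m ↔ (m : Matrix (Fin n) (Fin n) ℤ) ∣ g - 1 := by
  refine (Matrix.SpecialLinearGroup.ext_iff _ _).trans ?_
  rw [Matrix.natCast_dvd_iff]
  refine forall₂_congr fun i j => ?_
  rw [eq_comm, Matrix.sub_apply, ← ZMod.intCast_eq_intCast_iff_dvd_sub]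
  rcases eq_or_ne i j with rfl | hij <;> simp [one_apply, *]

theorem pow_pow_mem_Gamma_pow_succ {n p : ℕ} {g : SpecialLinearGroup (Fin n) ℤ}
    (hg : g ∈ Gamma n p) (k : ℕ) : g ^ p ^ k ∈ Gamma n (p ^ (k + 1)) := by
  rw [mem_Gamma_iff] at hg ⊢
  simpa using natCast_pow_succ_dvd_pow_pow_sub_one hg k

theorem exists_notMem_Gamma_pow_succ {n p : ℕ} (hp : 1 < p) {g : SpecialLinearGroup (Fin n) ℤ}
    (hg : g ≠ 1) : ∃ k, g ∉ Gamma n (p ^ (k + 1)) := by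
  obtain ⟨i, j, hij⟩ : ∃ i j, (g - 1 : Matrix (Fin n) (Fin n) ℤ) i j ≠ 0 := by
    by_contra! h
    exact hg (Matrix.SpecialLinearGroup.ext _ _ fun i j => sub_eq_zero.mp (h i j))
  set d := (g - 1 : Matrix (Fin n) (Fin n) ℤ) i j
  refine ⟨d.natAbs, fun hmem => hij ?_⟩
  have hdvd := Matrix.natCast_dvd_iff.mp (mem_Gamma_iff.mp hmem) i j
  refine Int.eq_zero_of_dvd_of_natAbs_lt_natAbs hdvd ?_
  rw [Int.natAbs_natCast]
  calc d.natAbs < p ^ d.natAbs := Nat.lt_pow_self hp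
    _ ≤ p ^ (d.natAbs + 1) := Nat.pow_le_pow_right (by omega) d.natAbs.le_succ

theorem infinite_Gamma {n m : ℕ} (hn : 2 ≤ n) (hm : m ≠ 0) : Infinite (Gamma n m) := by
  let i : Fin n := ⟨0, by omega⟩
  let j : Fin n := ⟨1, by omega⟩
  have hij : i ≠ j := by simp [i, j, Fin.ext_iff]
  let T : ℤ → Gamma n m := fun t =>
    ⟨⟨transvection i j (m * t), det_transvection_of_ne i j hij _⟩,
      mem_Gamma_iff.mpr ⟨single i j t, by
        change transvection i j (m * t) - 1 = _
        rw [transvection, add_sub_cancel_left, ← nsmul_eq_mul, ← nsmul_eq_mul,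
          smul_single]⟩⟩
  refine Infinite.of_injective T fun a b hab => ?_
  have := congr_arg (fun g : Gamma n m => (g : Matrix (Fin n) (Fin n) ℤ) i j) hab
  simpa [T, transvection, one_apply_ne hij, hm] using this

theorem IsPGroup.exists_surjective_multiplicative_zmod {p : ℕ} [Fact p.Prime] {G : Type*}
    [Group G] [Finite G] [Nontrivial G] (hG : IsPGroup p G) :
    ∃ φ : G →* Multiplicative (ZMod p), Function.Surjective φ := by
  obtain ⟨m, hm⟩ := hG.exists_card_eq
  obtain ⟨m, rfl⟩ : ∃ m', m = m' + 1 := Nat.exists_eq_succ_of_ne_zero fun h0 => by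
    simpa [h0] using (Finite.one_lt_card (α := G)).trans_eq hm
  obtain ⟨N, hN⟩ := Sylow.exists_subgroup_card_pow_prime p (hm ▸ pow_dvd_pow p m.le_succ)
  have hindex : N.index = p := by
    have := N.card_mul_index
    rw [hN, hm, pow_succ] at this
    exact Nat.eq_of_mul_eq_mul_left (pow_pos (Fact.out : p.Prime).pos m) this
  have : N.Normal := Subgroup.normal_of_index_eq_minFac_card <| by
    rw [hindex, hm, (Fact.out : p.Prime).pow_minFac m.succ_ne_zero]
  let e : G ⧸ N ≃* Multiplicative (ZMod p) := mulEquivOfPrimeCardEq hindex (by simp)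
  exact ⟨e.toMonoidHom.comp (QuotientGroup.mk' N),
    e.surjective.comp (QuotientGroup.mk'_surjective N)⟩

theorem exists_surjective_multiplicative_zmod_of_pow_eq_one {p : ℕ} [Fact p.Prime]
    {G Q : Type*} [Group G] [Group Q] [Finite Q] (f : G →* Q) (k : ℕ)
    (hf : ∀ g, f g ^ p ^ k = 1) (hne : f ≠ 1) :
    ∃ φ : G →* Multiplicative (ZMod p), Function.Surjective φ := by
  have hpgroup : IsPGroup p f.range := fun ⟨_, g, hg⟩ => ⟨k, Subtype.ext (hg ▸ hf g)⟩
  have : Nontrivial f.range :=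
    (Subgroup.nontrivial_iff_ne_bot _).mpr (mt MonoidHom.range_eq_bot_iff.mp hne)
  obtain ⟨φ, hφ⟩ := hpgroup.exists_surjective_multiplicative_zmod
  exact ⟨φ.comp f.rangeRestrict, hφ.comp f.rangeRestrict_surjective⟩

/-- Every finite index subgroup of the principal congruence subgroup `Γ_n(p)` (p prime)
surjects onto the cyclic group `ℤ/pℤ`. -/
theorem finite_index_subgroup_surjects_onto_Cp (p : ℕ) (hp : p.Prime)
    (n : ℕ) (hn : 2 ≤ n) (H : Subgroup ↥(Gamma n p)) (hH : H.FiniteIndex) :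
    ∃ φ : ↥H →* Multiplicative (ZMod p), Function.Surjective φ := by
  have : Fact p.Prime := ⟨hp⟩
  have : Infinite (Gamma n p) := infinite_Gamma hn hp.ne_zero
  have : Infinite H := by
    refine not_finite_iff_infinite.mp fun hfin => ?_
    exact ((Subgroup.finite_iff_finite_and_finiteIndex H).mpr ⟨hfin, hH⟩).false
  obtain ⟨h, hh⟩ := exists_ne (1 : H)
  obtain ⟨k, hk⟩ := exists_notMem_Gamma_pow_succ hp.one_lt
    (g := ((h : Gamma n p) : SpecialLinearGroup (Fin n) ℤ)) (by simpa using hh)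
  let ψ : H →* SpecialLinearGroup (Fin n) (ZMod (p ^ (k + 1))) :=
    (SpecialLinearGroup.map (Int.castRingHom _)).comp ((Gamma n p).subtype.comp H.subtype)
  have : NeZero (p ^ (k + 1)) := ⟨pow_ne_zero _ hp.ne_zero⟩
  refine exists_surjective_multiplicative_zmod_of_pow_eq_one ψ k (fun g => ?_) fun hψ => ?_
  · rw [← map_pow]
    exact pow_pow_mem_Gamma_pow_succ (g : Gamma n p).2 k
  · exact hk (DFunLike.congr_fun hψ h)
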